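/- Let n ≥ 4 be an integer and let v_k = exp(2πik/n) ∈ ℂ (indices modulo n) be the vertices of the regular n-gon inscribed in the unit circle. Let i, j be indices such that the sides [v_i, v_{i+1}] and [v_j, v_{j+1}] are distinct and non-adjacent (i.e. i ≢ j, i+1 ≢ j and j+1 ≢ i modulo n). Then for every point p in the segment [v_i, v_{i+1}] and every point q in the segment [v_j, v_{j+1}], one has |p − q| ≥ |v_1 − v_0|; that is, any straight segment joining two non-adjacent sides of the regular n-gon has length at least the side length. -/

import Mathlib

open Real

noncomputable def vtx (n : ℕ) (k : ℤ) : ℂ :=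
  Complex.exp (2 * Real.pi * Complex.I * k / n)

lemma sin_lb {a x : ℝ} (ha0 : 0 ≤ a) (ha : a ≤ π / 2) (h1 : a ≤ x) (h2 : x ≤ π - a) :
    Real.sin a ≤ Real.sin x := by
  rcases le_total x (π / 2) with h | h
  · exact Real.sin_le_sin_of_le_of_le_pi_div_two (by linarith) h h1
  · rw [← Real.sin_pi_sub x]
    exact Real.sin_le_sin_of_le_of_le_pi_div_two (by linarith) (by linarith) (by linarith)

lemma vtx_eq (n : ℕ) (k : ℤ) :
    vtx n k = Complex.exp ((2 * π * (k : ℝ) / (n : ℝ) : ℝ) * Complex.I) := by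
  unfold vtx; congr 1; push_cast; ring

lemma vtx_congr (n : ℕ) (hn : 0 < n) {a b : ℤ} (h : a ≡ b [ZMOD (n : ℤ)]) :
    vtx n a = vtx n b := by
  obtain ⟨m, hm⟩ := Int.ModEq.dvd h
  rw [vtx_eq, vtx_eq, Complex.exp_eq_exp_iff_exists_int]
  refine ⟨-m, ?_⟩
  have hn' : (n : ℝ) ≠ 0 := by positivity
  have hnC : (n : ℂ) ≠ 0 := by exact_mod_cast hn'
  have hmC : (b : ℂ) - (a : ℂ) = (n : ℂ) * (m : ℂ) := by exact_mod_cast hm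
  have key : (n : ℂ) * (n : ℂ)⁻¹ = 1 := mul_inv_cancel₀ hnC
  push_cast
  linear_combination (-2 * (π : ℂ) * Complex.I / (n : ℂ)) * hmC - (2 * (π : ℂ) * Complex.I * (m : ℂ)) * key

theorem stmt3 (n : ℕ) (hn : 4 ≤ n) (i j : ℤ)
    (hij : ¬ i ≡ j [ZMOD (n : ℤ)])
    (hij1 : ¬ i + 1 ≡ j [ZMOD (n : ℤ)])
    (hji1 : ¬ j + 1 ≡ i [ZMOD (n : ℤ)])
    (p q : ℂ)
    (hp : p ∈ segment ℝ (vtx n i) (vtx n (i + 1)))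
    (hq : q ∈ segment ℝ (vtx n j) (vtx n (j + 1))) :
    ‖vtx n 1 - vtx n 0‖ ≤ ‖p - q‖ := by
  have hn0 : 0 < n := by omega
  have hnZ : (0 : ℤ) < (n : ℤ) := by exact_mod_cast hn0
  have hN : (0 : ℝ) < (n : ℝ) := by exact_mod_cast hn0
  have hN4 : (4 : ℝ) ≤ (n : ℝ) := by exact_mod_cast hn
  set N : ℝ := (n : ℝ) with hNdef
  -- the reduced index difference
  set r : ℤ := (j - i) % (n : ℤ) with hrdef
  have hr0 : 0 ≤ r := Int.emod_nonneg _ (by omega)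
  have hrlt : r < (n : ℤ) := Int.emod_lt_of_pos _ hnZ
  have hmod : j - i ≡ r [ZMOD (n : ℤ)] := (Int.emod_emod_of_dvd (j - i) dvd_rfl).symm
  have hcong : j ≡ i + r [ZMOD (n : ℤ)] := by
    calc j = i + (j - i) := by ring
    _ ≡ i + r [ZMOD (n : ℤ)] := hmod.add_left i
  have h2 : 2 ≤ r := by
    rcases show r = 0 ∨ r = 1 ∨ 2 ≤ r by omega with h | h | h
    · exact absurd (show i ≡ j [ZMOD (n : ℤ)] by simpa [h] using hcong.symm) hij
    · exact absurd (show i + 1 ≡ j [ZMOD (n : ℤ)] by simpa [h] using hcong.symm) hij1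
    · exact h
  have hrn2 : r ≤ (n : ℤ) - 2 := by
    rcases show r = (n : ℤ) - 1 ∨ r ≤ (n : ℤ) - 2 by omega with h | h
    · exfalso
      apply hji1
      have hzero : (n : ℤ) ≡ 0 [ZMOD (n : ℤ)] := Int.modEq_zero_iff_dvd.mpr dvd_rfl
      calc j + 1 ≡ (i + r) + 1 [ZMOD (n : ℤ)] := hcong.add_right 1
      _ = i + (n : ℤ) := by rw [h]; ring
      _ ≡ i + 0 [ZMOD (n : ℤ)] := hzero.add_left i
      _ = i := by ring
    · exact h
  rw [vtx_congr n hn0 hcong, vtx_congr n hn0 (hcong.add_right 1)] at hq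
  -- real bounds on r
  have hrR2 : (2 : ℝ) ≤ (r : ℝ) := by exact_mod_cast h2
  have hrRn : (r : ℝ) ≤ N - 2 := by
    have : ((r : ℤ) : ℝ) ≤ ((n : ℤ) - 2 : ℤ) := by exact_mod_cast hrn2
    push_cast at this; linarith
  have hpos : 0 < π / N := by positivity
  have hπ : N * (π / N) = π := by field_simp
  have hπN2 : π / N ≤ π / 2 := by
    apply div_le_div_of_nonneg_left Real.pi_pos.le (by norm_num)
    linarith
  -- the rotation
  set θ : ℝ := (2 * (i : ℝ) + (r : ℝ) + 1) * π / N with hθdef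
  set e : ℂ := Complex.exp ((-θ : ℝ) * Complex.I) with hedef
  have key : ∀ k : ℤ, (vtx n k * e).im = Real.sin (2 * π * (k : ℝ) / N - θ) := by
    intro k
    rw [vtx_eq, hedef, ← Complex.exp_add]
    rw [show ((2 * π * (k : ℝ) / N : ℝ) : ℂ) * Complex.I + ((-θ : ℝ) : ℂ) * Complex.I
        = ((2 * π * (k : ℝ) / N - θ : ℝ) : ℂ) * Complex.I by push_cast; ring]
    exact Complex.exp_ofReal_mul_I_im _
  have hNne : N ≠ 0 := ne_of_gt hN
  have hvi : (vtx n i * e).im = -Real.sin (((r : ℝ) + 1) * (π / N)) := by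
    rw [key i, show 2 * π * (i : ℝ) / N - θ = -(((r : ℝ) + 1) * (π / N)) by
      rw [hθdef]; field_simp; ring, Real.sin_neg]
  have hvi1 : (vtx n (i + 1) * e).im = -Real.sin (((r : ℝ) - 1) * (π / N)) := by
    rw [key (i + 1), show 2 * π * ((i + 1 : ℤ) : ℝ) / N - θ = -(((r : ℝ) - 1) * (π / N)) by
      push_cast; rw [hθdef]; field_simp; ring, Real.sin_neg]
  have hvj : (vtx n (i + r) * e).im = Real.sin (((r : ℝ) - 1) * (π / N)) := by
    rw [key (i + r), show 2 * π * ((i + r : ℤ) : ℝ) / N - θ = ((r : ℝ) - 1) * (π / N) by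
      push_cast; rw [hθdef]; field_simp; ring]
  have hvj1 : (vtx n (i + r + 1) * e).im = Real.sin (((r : ℝ) + 1) * (π / N)) := by
    rw [key (i + r + 1), show 2 * π * ((i + r + 1 : ℤ) : ℝ) / N - θ = ((r : ℝ) + 1) * (π / N) by
      push_cast; rw [hθdef]; field_simp; ring]
  -- sine bounds
  set s : ℝ := Real.sin (π / N) with hsdef
  have hs1 : s ≤ Real.sin (((r : ℝ) - 1) * (π / N)) := by
    apply sin_lb hpos.le hπN2
    · nlinarith [hπ, hpos.le, hrR2]
    · nlinarith [hπ, hpos.le, hrRn]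
  have hs2 : s ≤ Real.sin (((r : ℝ) + 1) * (π / N)) := by
    apply sin_lb hpos.le hπN2
    · nlinarith [hπ, hpos.le, hrR2]
    · nlinarith [hπ, hpos.le, hrRn]
  have hspos : 0 < s := Real.sin_pos_of_pos_of_lt_pi hpos (by nlinarith [hπ, hpos.le])
  -- linearity of the projection on segments
  have lin : ∀ (a b : ℝ) (V W : ℂ), ((a • V + b • W) * e).im = a * (V * e).im + b * (W * e).im := by
    intro a b V W
    rw [add_mul, smul_mul_assoc, smul_mul_assoc, Complex.add_im, Complex.smul_im, Complex.smul_im]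
    simp [smul_eq_mul]
  obtain ⟨a, b, ha, hb, hab, rfl⟩ := hp
  obtain ⟨c, d, hc, hd, hcd, rfl⟩ := hq
  have hfp : ((a • vtx n i + b • vtx n (i + 1)) * e).im ≤ -s := by
    rw [lin, hvi, hvi1]
    have habsum : a * s + b * s = s := by rw [← add_mul, hab, one_mul]
    linarith [mul_le_mul_of_nonneg_left hs2 ha, mul_le_mul_of_nonneg_left hs1 hb]
  have hfq : s ≤ ((c • vtx n (i + r) + d • vtx n (i + r + 1)) * e).im := by
    rw [lin, hvj, hvj1]
    have hcdsum : c * s + d * s = s := by rw [← add_mul, hcd, one_mul]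
    linarith [mul_le_mul_of_nonneg_left hs1 hc, mul_le_mul_of_nonneg_left hs2 hd]
  -- side length
  have habs : ‖vtx n 1 - vtx n 0‖ = 2 * s := by
    have h1 : vtx n 1 = Complex.exp ((2 * (π / N) : ℝ) * Complex.I) := by
      rw [vtx_eq]; congr 2; rw [hNdef]; push_cast; ring
    have h0 : vtx n 0 = 1 := by
      unfold vtx; simp
    rw [h1, h0, Complex.norm_def, Complex.normSq_apply]
    simp only [Complex.sub_re, Complex.sub_im, Complex.one_re, Complex.one_im,
      Complex.exp_ofReal_mul_I_re, Complex.exp_ofReal_mul_I_im]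
    rw [show (Real.cos (2 * (π / N)) - 1) * (Real.cos (2 * (π / N)) - 1)
        + (Real.sin (2 * (π / N)) - 0) * (Real.sin (2 * (π / N)) - 0) = (2 * s) ^ 2 by
      rw [hsdef]
      linear_combination (Real.sin_sq_add_cos_sq (2 * (π / N)))
        - 2 * (Real.cos_two_mul (π / N)) - 4 * (Real.sin_sq_add_cos_sq (π / N))]
    exact Real.sqrt_sq (by linarith)
  rw [habs]
  set P := a • vtx n i + b • vtx n (i + 1)
  set Q := c • vtx n (i + r) + d • vtx n (i + r + 1)
  have step1 : 2 * s ≤ ((Q - P) * e).im := by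
    rw [sub_mul, Complex.sub_im]; linarith
  calc 2 * s ≤ ((Q - P) * e).im := step1
  _ ≤ |((Q - P) * e).im| := le_abs_self _
  _ ≤ ‖(Q - P) * e‖ := Complex.abs_im_le_norm _
  _ = ‖Q - P‖ * ‖e‖ := norm_mul _ _
  _ = ‖Q - P‖ := by rw [hedef, Complex.norm_exp_ofReal_mul_I, mul_one]
  _ = ‖P - Q‖ := norm_sub_rev Q P
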